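/- Define a relation ⪯ on W^J × W by (x', y') ⪯ (x, y) iff there exists u ∈ W_J with x'u ≤ x and y'u ≥ y. Then ⪯ is a partial order on W^J × W. -/

import Mathlib

/-- The Bruhat order on a Coxeter group, defined via the subword property:
`u ≤ v` iff some reduced word for `v` contains a subword whose product is `u`. -/
def bruhatLE {B W : Type*} [Group W] {M : CoxeterMatrix B} (cs : CoxeterSystem M W)
    (u v : W) : Prop :=
  ∃ l : List B, cs.IsReduced l ∧ cs.wordProd l = v ∧
    ∃ l' : List B, l'.Sublist l ∧ cs.wordProd l' = u

/-- `x` is a minimal length representative of its coset `x W_J`. -/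
def isMinRep {B W : Type*} [Group W] {M : CoxeterMatrix B} (cs : CoxeterSystem M W)
    (J : Set B) (x : W) : Prop :=
  ∀ u ∈ Subgroup.closure (cs.simple '' J), cs.length x ≤ cs.length (x * u)

/-- The relation `⪯` on `W^J × W`:
`(x', y') ⪯ (x, y)` iff there is `u ∈ W_J` with `x'u ≤ x` and `y'u ≥ y`. -/
def preceq {B W : Type*} [Group W] {M : CoxeterMatrix B} (cs : CoxeterSystem M W)
    (J : Set B) (p q : W × W) : Prop :=
  ∃ u ∈ Subgroup.closure (cs.simple '' J),
    bruhatLE cs (p.1 * u) q.1 ∧ bruhatLE cs q.2 (p.2 * u)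

/-
The subword definition of Bruhat order agrees with its chain description: `u ≤ v` iff `v` is
reached from `u` by right multiplications by reflections that increase length. Both directions
rest on the strong exchange condition, which comes from the parity representation of
Björner–Brenti; the subword-to-chain direction is proved by induction on length, jointly with
the lifting property `u ≤ v → u s ≤ v ∨ u s ≤ v s`.

For `x ∈ W^J` and `u ∈ W_J` we have `ℓ (x u) = ℓ x + ℓ u`, which forces `u = v = 1` in
antisymmetry. For transitivity, given `(x₁, y₁) ⪯ (x₂, y₂)` and `x₂ v ≤ x₃`, `y₃ ≤ y₂ v`, walk
along a reduced word for `v ∈ W_J`: at each letter the lifting property keeps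
`(x₁, y₁) ⪯ (x₂ v', y₂ v')` for the prefix `v'` read so far, and at the end Bruhat transitivity
finishes.
-/

open List Relation

namespace CoxeterSystem

variable {B W : Type*} [Group W] {M : CoxeterMatrix B} (cs : CoxeterSystem M W)

local prefix:100 "s" => cs.simple
local prefix:100 "π" => cs.wordProd
local prefix:100 "ℓ" => cs.length
local prefix:100 "lis " => cs.leftInvSeq

theorem prod_map_alternatingWord_two_mul {G : Type*} [Monoid G] (f : B → G) (i j : B) (m : ℕ) :
    ((alternatingWord i j (2 * m)).map f).prod = (f i * f j) ^ m := by
  induction m with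
  | zero => simp [alternatingWord]
  | succ m ih =>
    rw [show 2 * (m + 1) = 2 * m + 1 + 1 by ring, alternatingWord_succ', alternatingWord_succ']
    simp [ih, pow_succ', mul_assoc]

theorem conj_simple_eq_simple_iff (i : B) (x : W) : MulAut.conj (s i) x = s i ↔ x = s i := by
  simp [MulAut.conj_apply, mul_assoc, mul_eq_one_iff_eq_inv]

section ParityRepresentation

variable [DecidableEq W]

theorem even_count_leftInvSeq_alternatingWord (i j : B) (t : W) :
    Even ((lis (alternatingWord i j (2 * M i j))).count t) := by
  set L := lis (alternatingWord i j (2 * M i j))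
  have hlen : L.length = 2 * M i j := by simp [L]
  -- the inversion sequence of `(s i s j) ^ M i j` is periodic with period `M i j`
  have hperiod : L.drop (M i j) = L.take (M i j) := by
    refine ext_getElem (by simp [hlen]; omega) fun k h₁ h₂ => ?_
    simp only [length_take, length_drop] at h₁ h₂
    simp only [getElem_drop, getElem_take, L]
    rw [getElem_leftInvSeq_alternatingWord cs i j _ _ (by omega),
      getElem_leftInvSeq_alternatingWord cs i j _ _ (by omega), prod_alternatingWord_eq_mul_pow,
      prod_alternatingWord_eq_mul_pow, if_neg (by simp [parity_simps]),
      if_neg (by simp [parity_simps]), show (2 * (M i j + k) + 1) / 2 = k + M i j by omega,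
      show (2 * k + 1) / 2 = k by omega, pow_add, simple_mul_simple_pow', mul_one]
  rw [← take_append_drop (M i j) L, count_append, hperiod]
  exact ⟨_, rfl⟩

/-- The permutation `η_i` of Björner–Brenti, *Combinatorics of Coxeter groups*, §1.4. -/
def parityPerm (i : B) : Equiv.Perm (W × ZMod 2) :=
  Function.Involutive.toPerm
    (fun p => (MulAut.conj (s i) p.1, p.2 + if p.1 = s i then 1 else 0)) <| by
    rintro ⟨x, e⟩
    simp only [conj_simple_eq_simple_iff, ← MulAut.mul_apply, ← map_mul, simple_mul_simple_self,
      map_one, MulAut.one_apply, add_assoc, Prod.mk.injEq, true_and]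
    split_ifs <;> simp [CharTwo.add_self_eq_zero]

theorem parityPerm_apply (i : B) (x : W) (e : ZMod 2) :
    cs.parityPerm i (x, e) = (MulAut.conj (s i) x, e + if x = s i then 1 else 0) := rfl

theorem prod_map_parityPerm_apply (ω : List B) (x : W) (e : ZMod 2) :
    (ω.map cs.parityPerm).prod (x, e) =
      (MulAut.conj (π ω) x, e + (lis ω).count (MulAut.conj (π ω) x)) := by
  induction ω generalizing x e with
  | nil => simp
  | cons i ω ih =>
    have hinj : Function.Injective (MulAut.conj (s i)) := (MulAut.conj (s i)).injective
    rw [map_cons, prod_cons, Equiv.Perm.mul_apply, ih, parityPerm_apply, wordProd_cons, map_mul,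
      MulAut.mul_apply]
    generalize MulAut.conj (π ω) x = y
    simp only [leftInvSeq, count_cons, count_map_of_injective _ _ hinj, beq_iff_eq,
      eq_comm (a := s i), conj_simple_eq_simple_iff]
    push_cast [add_assoc]
    rfl

theorem isLiftable_parityPerm : M.IsLiftable cs.parityPerm := by
  intro i j
  ext ⟨x, e⟩ : 1
  obtain ⟨c, hc⟩ := cs.even_count_leftInvSeq_alternatingWord i j x
  have hone : π (alternatingWord i j (2 * M i j)) = 1 := by
    rw [wordProd, prod_map_alternatingWord_two_mul, simple_mul_simple_pow]
  rw [← prod_map_alternatingWord_two_mul, prod_map_parityPerm_apply, hone]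
  simp [hc, CharTwo.add_self_eq_zero]

def parityRep : W →* Equiv.Perm (W × ZMod 2) :=
  cs.lift ⟨cs.parityPerm, cs.isLiftable_parityPerm⟩

theorem parityRep_wordProd_apply (ω : List B) (x : W) (e : ZMod 2) :
    cs.parityRep (π ω) (x, e) =
      (MulAut.conj (π ω) x, e + (lis ω).count (MulAut.conj (π ω) x)) := by
  rw [← prod_map_parityPerm_apply, parityRep, wordProd, map_list_prod, List.map_map]
  congr 3
  exact funext (cs.lift_apply_simple cs.isLiftable_parityPerm)

/-- The parity of the number of occurrences of `t` in the left inversion sequence of any word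
for `w` (see `invParity_wordProd`). -/
def invParity (w t : W) : ZMod 2 :=
  (cs.parityRep w (MulAut.conj w⁻¹ t, 0)).2

theorem invParity_wordProd (ω : List B) (t : W) :
    cs.invParity (π ω) t = (lis ω).count t := by
  simp [invParity, parityRep_wordProd_apply, mul_assoc]

theorem parityRep_apply (w x : W) (e : ZMod 2) :
    cs.parityRep w (x, e) = (MulAut.conj w x, e + cs.invParity w (MulAut.conj w x)) := by
  obtain ⟨ω, rfl⟩ := cs.wordProd_surjective w
  simp [parityRep_wordProd_apply, invParity_wordProd]

theorem invParity_mul (a b t : W) :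
    cs.invParity (a * b) t = cs.invParity a t + cs.invParity b (MulAut.conj a⁻¹ t) := by
  have h := congrArg Prod.snd
    (DFunLike.congr_fun (map_mul cs.parityRep a b) (MulAut.conj (a * b)⁻¹ t, 0))
  have hb : MulAut.conj b (MulAut.conj (a * b)⁻¹ t) = MulAut.conj a⁻¹ t := by
    simp only [MulAut.conj_apply]; group
  have ha : MulAut.conj a (MulAut.conj a⁻¹ t) = t := by
    simp only [MulAut.conj_apply]; group
  have hab : MulAut.conj (a * b) (MulAut.conj (a * b)⁻¹ t) = t := by
    simp only [MulAut.conj_apply]; group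
  simp only [Equiv.Perm.mul_apply, parityRep_apply, hb, ha, hab, zero_add] at h
  rw [h, add_comm]

theorem invParity_self {t : W} (ht : cs.IsReflection t) : cs.invParity t t = 1 := by
  obtain ⟨w, i, rfl⟩ := ht
  have hw : cs.invParity w (w * s i * w⁻¹) + cs.invParity w⁻¹ (s i) = 0 := by
    have h := cs.invParity_mul w w⁻¹ (w * s i * w⁻¹)
    rw [mul_inv_cancel, ← wordProd_nil, invParity_wordProd] at h
    simpa [MulAut.conj_apply, mul_assoc] using h.symm
  have hs : cs.invParity (s i) (s i) = 1 := by
    simpa [leftInvSeq] using cs.invParity_wordProd [i] (s i)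
  have h₁ : w⁻¹ * (w * s i * w⁻¹) * w = s i := by group
  have h₂ : (w * s i)⁻¹ * (w * s i * w⁻¹) * (w * s i) = s i := by group
  rw [invParity_mul, invParity_mul]
  simp only [MulAut.conj_apply, inv_inv, h₁, h₂, hs]
  linear_combination hw

end ParityRepresentation

/-- The strong exchange condition. -/
theorem mem_leftInvSeq_of_length_mul_lt {ω : List B} {t : W} (ht : cs.IsReflection t)
    (hlt : ℓ (t * π ω) < ℓ (π ω)) : t ∈ lis ω := by
  classical
  obtain ⟨μ, hμ, hμt⟩ := cs.exists_isReduced (t * π ω)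
  have hμ0 : t ∉ lis μ := fun hmem => by
    have := (cs.isLeftInversion_of_mem_leftInvSeq hμ hmem).2
    rw [← hμt, ← mul_assoc, ht.mul_self, one_mul] at this
    omega
  have hparity : cs.invParity (π ω) t = 1 := by
    have h := cs.invParity_mul t (t * π ω) t
    have hconj : MulAut.conj t⁻¹ t = t := by simp
    rw [← mul_assoc, ht.mul_self, one_mul, cs.invParity_self ht, hconj, hμt,
      cs.invParity_wordProd μ, count_eq_zero.mpr hμ0] at h
    simpa using h
  rw [invParity_wordProd] at hparity
  exact count_pos_iff.mp (Nat.pos_of_ne_zero fun h0 => by simp [h0] at hparity)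

theorem exists_mul_wordProd_eq_eraseIdx {ω : List B} {t : W} (ht : cs.IsReflection t)
    (hlt : ℓ (t * π ω) < ℓ (π ω)) : ∃ j < ω.length, t * π ω = π (ω.eraseIdx j) := by
  obtain ⟨j, hj, rfl⟩ := mem_iff_getElem.mp (cs.mem_leftInvSeq_of_length_mul_lt ht hlt)
  rw [length_leftInvSeq] at hj
  exact ⟨j, hj, by rw [← getD_eq_getElem _ 1, getD_leftInvSeq_mul_wordProd]⟩

theorem exists_wordProd_mul_eq_eraseIdx {ω : List B} {t : W} (ht : cs.IsReflection t)
    (hlt : ℓ (π ω * t) < ℓ (π ω)) : ∃ j < ω.length, π ω * t = π (ω.eraseIdx j) := by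
  have hconj : π ω * t * (π ω)⁻¹ * π ω = π ω * t := by group
  rw [← hconj] at hlt ⊢
  exact cs.exists_mul_wordProd_eq_eraseIdx (ht.conj _) hlt

theorem isReduced_append_singleton {ω : List B} (hω : cs.IsReduced ω) {i : B}
    (hi : ℓ (π ω * s i) = ℓ (π ω) + 1) : cs.IsReduced (ω ++ [i]) := by
  rw [IsReduced, wordProd_append, wordProd_singleton, hi, hω.eq, length_append, length_singleton]

theorem exists_isReduced_sublist (ω : List B) :
    ∃ ω', ω' <+ ω ∧ cs.IsReduced ω' ∧ π ω' = π ω := by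
  induction ω using List.reverseRecOn with
  | nil => exact ⟨[], Sublist.refl _, by simp [IsReduced], rfl⟩
  | append_singleton ω i ih =>
    obtain ⟨ω', hsub, hred, hprod⟩ := ih
    have hsub' : ω' <+ ω ++ [i] := hsub.trans (sublist_append_left _ _)
    rcases cs.length_mul_simple (π ω') i with hup | hdown
    · exact ⟨ω' ++ [i], hsub.append (Sublist.refl _), cs.isReduced_append_singleton hred hup,
        by rw [wordProd_append, wordProd_append, hprod]⟩
    · obtain ⟨j, hj, hj'⟩ :=
        cs.exists_wordProd_mul_eq_eraseIdx (ω := ω') (cs.isReflection_simple i) (by omega)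
      refine ⟨ω'.eraseIdx j, (eraseIdx_sublist _ _).trans hsub', ?_, ?_⟩
      · rw [IsReduced, ← hj', length_eraseIdx_of_lt hj, ← hred.eq]
        omega
      · rw [← hj', hprod, wordProd_append, wordProd_singleton]

def BruhatStep (u v : W) : Prop := ∃ t, cs.IsReflection t ∧ v = u * t ∧ ℓ u < ℓ v

theorem length_le_of_reflTransGen {u v : W} (h : ReflTransGen cs.BruhatStep u v) :
    ℓ u ≤ ℓ v := by
  induction h with
  | refl => exact le_rfl
  | tail _ hstep ih =>
    obtain ⟨_, _, _, hlt⟩ := hstep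
    omega

theorem exists_sublist_of_reflTransGen {u : W} {ω : List B}
    (h : ReflTransGen cs.BruhatStep u (π ω)) : ∃ ω', ω' <+ ω ∧ π ω' = u := by
  induction h using ReflTransGen.head_induction_on with
  | refl => exact ⟨ω, Sublist.refl _, rfl⟩
  | @head a _ hstep _ ih =>
    obtain ⟨ω', hsub, rfl⟩ := ih
    obtain ⟨t, ht, hc, hlt⟩ := hstep
    have ha : π ω' * t = a := by rw [hc, mul_assoc, ht.mul_self, mul_one]
    obtain ⟨j, -, hj⟩ := cs.exists_wordProd_mul_eq_eraseIdx ht (by rwa [ha])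
    exact ⟨ω'.eraseIdx j, (eraseIdx_sublist _ _).trans hsub, by rw [← hj, ha]⟩

-- `hsub` is the induction hypothesis of `reflTransGen_of_sublist`, which is proved jointly.
theorem reflTransGen_mul_simple_of_bruhatStep {a c : W}
    (hsub : ∀ μ μ' : List B, cs.IsReduced μ → μ.length < ℓ c → μ' <+ μ →
      ReflTransGen cs.BruhatStep (π μ') (π μ))
    (h : cs.BruhatStep a c) (i : B) :
    ReflTransGen cs.BruhatStep (a * s i) c ∨ ReflTransGen cs.BruhatStep (a * s i) (c * s i) := by
  obtain ⟨t, ht, rfl, hlt⟩ := h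
  rcases cs.length_mul_simple a i with ha | ha
  · rcases cs.length_mul_simple (a * t) i with hc | hc
    · refine .inr (.single ⟨s i * t * s i, by simpa using ht.conj (s i), ?_, by omega⟩)
      simp [mul_assoc]
    · obtain ⟨μ, hμ, hμc⟩ := cs.exists_isReduced (a * t * s i)
      have hc' : π (μ ++ [i]) = a * t := by simp [wordProd_append, ← hμc]
      obtain ⟨k, hk, hka⟩ := cs.exists_wordProd_mul_eq_eraseIdx ht
        (ω := μ ++ [i]) (by rwa [hc', mul_assoc, ht.mul_self, mul_one])
      rw [hc', mul_assoc, ht.mul_self, mul_one] at hka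
      rcases lt_or_ge k μ.length with hkμ | hkμ
      · rw [eraseIdx_append_of_lt_length hkμ, wordProd_append, wordProd_singleton] at hka
        refine .inr ?_
        rw [hμc, hka, simple_mul_simple_cancel_right]
        exact hsub μ _ hμ (by rw [← hμ.eq, ← hμc]; omega) (eraseIdx_sublist _ _)
      · have hk' : k - μ.length = 0 := by simp at hk; omega
        rw [eraseIdx_append_of_length_le hkμ, hk'] at hka
        have haμ : a = π μ := by simpa using hka
        have has : a * s i = a * t := calc
          a * s i = π μ * s i := by rw [← haμ]
          _ = a * t := by rw [← hμc, simple_mul_simple_cancel_right]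
        exact .inl (has ▸ .refl)
  · exact .inl (.head ⟨s i, cs.isReflection_simple i, by simp [mul_assoc], by omega⟩
      (.single ⟨t, ht, rfl, hlt⟩))

theorem reflTransGen_lifting {u v : W}
    (hsub : ∀ μ μ' : List B, cs.IsReduced μ → μ.length < ℓ v → μ' <+ μ →
      ReflTransGen cs.BruhatStep (π μ') (π μ))
    (h : ReflTransGen cs.BruhatStep u v) (i : B) :
    ReflTransGen cs.BruhatStep (u * s i) v ∨ ReflTransGen cs.BruhatStep (u * s i) (v * s i) := by
  induction h using ReflTransGen.head_induction_on with
  | refl => exact .inr .refl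
  | head hstep hrest ih =>
    have hsub' := fun μ μ' hμ hlen =>
      hsub μ μ' hμ (lt_of_lt_of_le hlen (cs.length_le_of_reflTransGen hrest))
    rcases cs.reflTransGen_mul_simple_of_bruhatStep hsub' hstep i with h | h
    · exact .inl (h.trans hrest)
    · exact ih.imp h.trans h.trans

theorem reflTransGen_of_sublist {ω ω' : List B} (hω : cs.IsReduced ω) (h : ω' <+ ω) :
    ReflTransGen cs.BruhatStep (π ω') (π ω) := by
  induction hn : ω.length using Nat.strong_induction_on generalizing ω ω' with
  | _ n ih =>
  rcases eq_nil_or_concat ω with rfl | ⟨ω₀, j, rfl⟩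
  · rw [sublist_nil.mp h]
  rw [concat_eq_append] at hω h hn ⊢
  rw [length_append, length_singleton] at hn
  have hω₀ : cs.IsReduced ω₀ := by simpa using hω.take ω₀.length
  have hstep : cs.BruhatStep (π ω₀) (π (ω₀ ++ [j])) :=
    ⟨s j, cs.isReflection_simple j, by rw [wordProd_append, wordProd_singleton],
      by rw [hω₀.eq, hω.eq, length_append, length_singleton]; omega⟩
  obtain ⟨ω₁, ω₂, rfl, h₁, h₂⟩ := sublist_append_iff.mp h
  have h₁' := ih ω₀.length (by omega) hω₀ h₁ rfl
  rcases sublist_singleton.mp h₂ with rfl | rfl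
  · simpa using h₁'.tail hstep
  · rw [wordProd_append, wordProd_singleton]
    have hsub := fun (μ μ' : List B) hμ (hlen : μ.length < ℓ (π ω₀)) (hμ' : μ' <+ μ) =>
      ih μ.length (by rw [hω₀.eq] at hlen; omega) hμ hμ' rfl
    rcases cs.reflTransGen_lifting hsub h₁' j with h' | h'
    · exact h'.tail hstep
    · rwa [wordProd_append, wordProd_singleton]

theorem bruhatLE_iff_reflTransGen {u v : W} :
    bruhatLE cs u v ↔ ReflTransGen cs.BruhatStep u v := by
  constructor
  · rintro ⟨ω, hω, rfl, ω', hsub, rfl⟩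
    exact cs.reflTransGen_of_sublist hω hsub
  · intro h
    obtain ⟨ω, hω, rfl⟩ := cs.exists_isReduced v
    obtain ⟨ω', hsub, rfl⟩ := cs.exists_sublist_of_reflTransGen h
    exact ⟨ω, hω, rfl, ω', hsub, rfl⟩

theorem bruhatLE_refl (v : W) : bruhatLE cs v v :=
  cs.bruhatLE_iff_reflTransGen.mpr .refl

theorem bruhatLE_trans {u v w : W} (huv : bruhatLE cs u v) (hvw : bruhatLE cs v w) :
    bruhatLE cs u w := by
  rw [bruhatLE_iff_reflTransGen] at *
  exact huv.trans hvw

theorem length_le_of_bruhatLE {u v : W} (h : bruhatLE cs u v) : ℓ u ≤ ℓ v :=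
  cs.length_le_of_reflTransGen (cs.bruhatLE_iff_reflTransGen.mp h)

theorem eq_of_bruhatLE_of_length_le {u v : W} (h : bruhatLE cs u v) (hlen : ℓ v ≤ ℓ u) :
    u = v := by
  obtain ⟨ω, hω, rfl, ω', hsub, rfl⟩ := h
  have := cs.length_wordProd_le ω'
  rw [hω.eq] at hlen
  rw [hsub.eq_of_length (le_antisymm hsub.length_le (by omega))]

theorem bruhatLE_lifting {u v : W} (h : bruhatLE cs u v) (i : B) :
    bruhatLE cs (u * s i) v ∨ bruhatLE cs (u * s i) (v * s i) := by
  simp only [bruhatLE_iff_reflTransGen] at h ⊢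
  exact cs.reflTransGen_lifting (fun _ _ hμ _ hμ' => cs.reflTransGen_of_sublist hμ hμ') h i

theorem bruhatLE_mul_simple {u v : W} (h : bruhatLE cs u v) {i : B}
    (hi : ℓ (v * s i) = ℓ v + 1) : bruhatLE cs (u * s i) (v * s i) := by
  obtain ⟨ω, hω, rfl, ω', hsub, rfl⟩ := h
  exact ⟨ω ++ [i], cs.isReduced_append_singleton hω hi, by simp [wordProd_append],
    ω' ++ [i], hsub.append (Sublist.refl _), by simp [wordProd_append]⟩

theorem bruhatLE_mul_simple_right {u v : W} (h : bruhatLE cs u v) {i : B}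
    (hi : ℓ (v * s i) = ℓ v + 1) : bruhatLE cs u (v * s i) := by
  obtain ⟨ω, hω, rfl, ω', hsub, rfl⟩ := h
  exact ⟨ω ++ [i], cs.isReduced_append_singleton hω hi, by simp [wordProd_append],
    ω', hsub.trans (sublist_append_left _ _), rfl⟩

section Parabolic

variable (J : Set B)

theorem exists_word_of_mem_closure {u : W} (hu : u ∈ Subgroup.closure (cs.simple '' J)) :
    ∃ ω : List B, (∀ i ∈ ω, i ∈ J) ∧ π ω = u := by
  induction hu using Subgroup.closure_induction with
  | mem x hx =>
    obtain ⟨i, hi, rfl⟩ := hx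
    exact ⟨[i], by simpa using hi, wordProd_singleton cs i⟩
  | one => exact ⟨[], by simp, wordProd_nil cs⟩
  | mul x y _ _ hx hy =>
    obtain ⟨ω₁, h₁, rfl⟩ := hx
    obtain ⟨ω₂, h₂, rfl⟩ := hy
    exact ⟨ω₁ ++ ω₂, fun i hi => (mem_append.mp hi).elim (h₁ i) (h₂ i), wordProd_append cs _ _⟩
  | inv x _ hx =>
    obtain ⟨ω, h, rfl⟩ := hx
    exact ⟨ω.reverse, by simpa using h, wordProd_reverse cs ω⟩

theorem wordProd_mem_closure {ω : List B} (hω : ∀ i ∈ ω, i ∈ J) :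
    π ω ∈ Subgroup.closure (cs.simple '' J) :=
  Subgroup.list_prod_mem _ <| forall_mem_map.mpr fun i hi =>
    Subgroup.subset_closure ⟨i, hω i hi, rfl⟩

theorem exists_isReduced_word_of_mem_closure {u : W}
    (hu : u ∈ Subgroup.closure (cs.simple '' J)) :
    ∃ ω : List B, (∀ i ∈ ω, i ∈ J) ∧ cs.IsReduced ω ∧ π ω = u := by
  obtain ⟨ω, hωJ, rfl⟩ := cs.exists_word_of_mem_closure J hu
  obtain ⟨ω', hsub, hred, hprod⟩ := cs.exists_isReduced_sublist ω
  exact ⟨ω', fun i hi => hωJ i (hsub.subset hi), hred, hprod⟩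

end Parabolic

end CoxeterSystem

section Preceq

open CoxeterSystem

variable {B W : Type*} [Group W] {M : CoxeterMatrix B} (cs : CoxeterSystem M W) (J : Set B)

variable {cs J} in
theorem isMinRep.length_mul {x u : W} (hx : isMinRep cs J x)
    (hu : u ∈ Subgroup.closure (cs.simple '' J)) :
    cs.length (x * u) = cs.length x + cs.length u := by
  obtain ⟨ξ, hξ, rfl⟩ := cs.exists_isReduced x
  obtain ⟨ω, hωJ, rfl⟩ := cs.exists_word_of_mem_closure J hu
  obtain ⟨ν, hν, hνred, hνprod⟩ := cs.exists_isReduced_sublist (ξ ++ ω)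
  obtain ⟨ν₁, ν₂, rfl, h₁, h₂⟩ := sublist_append_iff.mp hν
  rw [wordProd_append, wordProd_append] at hνprod
  -- `π ν₁` lies in the coset `x W_J`, so minimality forces `ν₁ = ξ`
  have hν₂J := cs.wordProd_mem_closure J fun i hi => hωJ i (h₂.subset hi)
  have hmin := hx _ (mul_mem hu (inv_mem hν₂J))
  rw [← mul_assoc, ← hνprod, mul_inv_cancel_right, hξ.eq] at hmin
  obtain rfl := h₁.eq_of_length
    (le_antisymm h₁.length_le (hmin.trans (cs.length_wordProd_le ν₁)))
  have hν₂ := mul_left_cancel hνprod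
  refine le_antisymm (cs.length_mul_le _ _) ?_
  have := cs.length_wordProd_le ν₂
  rw [← hνprod, ← wordProd_append, hνred.eq, length_append, hξ.eq, ← hν₂]
  omega

theorem preceq_refl (p : W × W) : preceq cs J p p :=
  ⟨1, one_mem _, by simpa using cs.bruhatLE_refl p.1, by simpa using cs.bruhatLE_refl p.2⟩

theorem preceq_antisymm {p q : W × W} (hp : isMinRep cs J p.1) (hq : isMinRep cs J q.1)
    (hpq : preceq cs J p q) (hqp : preceq cs J q p) : p = q := by
  obtain ⟨u, hu, hx₁, hy₁⟩ := hpq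
  obtain ⟨v, hv, hx₂, hy₂⟩ := hqp
  have h₁ := cs.length_le_of_bruhatLE hx₁
  have h₂ := cs.length_le_of_bruhatLE hx₂
  rw [hp.length_mul hu] at h₁
  rw [hq.length_mul hv] at h₂
  obtain rfl : u = 1 := cs.length_eq_zero_iff.mp (by omega)
  obtain rfl : v = 1 := cs.length_eq_zero_iff.mp (by omega)
  rw [mul_one] at hx₁ hx₂ hy₁ hy₂
  exact Prod.ext (cs.eq_of_bruhatLE_of_length_le hx₁ (cs.length_le_of_bruhatLE hx₂))
    (cs.eq_of_bruhatLE_of_length_le hy₂ (cs.length_le_of_bruhatLE hy₁))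

theorem preceq_mul_simple {p q : W × W} {i : B} (hi : i ∈ J)
    (hq : cs.length (q.1 * cs.simple i) = cs.length q.1 + 1) (h : preceq cs J p q) :
    preceq cs J p (q.1 * cs.simple i, q.2 * cs.simple i) := by
  obtain ⟨w, hw, hx, hy⟩ := h
  rcases cs.bruhatLE_lifting hy i with hy' | hy'
  · exact ⟨w, hw, cs.bruhatLE_mul_simple_right hx hq, hy'⟩
  · refine ⟨w * cs.simple i, mul_mem hw (Subgroup.subset_closure ⟨i, hi, rfl⟩), ?_, ?_⟩
    · rw [← mul_assoc]
      exact cs.bruhatLE_mul_simple hx hq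
    · rwa [← mul_assoc]

theorem preceq_mul_wordProd {p q : W × W} (hq : isMinRep cs J q.1) {ω : List B}
    (hωJ : ∀ i ∈ ω, i ∈ J) (hω : cs.IsReduced ω) (h : preceq cs J p q) :
    preceq cs J p (q.1 * cs.wordProd ω, q.2 * cs.wordProd ω) := by
  induction ω using List.reverseRecOn with
  | nil => simpa using h
  | append_singleton ω i ih =>
    have hω' : cs.IsReduced ω := by simpa using hω.take ω.length
    have hωJ' : ∀ j ∈ ω, j ∈ J := fun j hj => hωJ j (mem_append_left _ hj)
    have hlen : cs.length (q.1 * cs.wordProd ω * cs.simple i) =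
        cs.length (q.1 * cs.wordProd ω) + 1 := by
      rw [mul_assoc, ← wordProd_singleton, ← wordProd_append,
        hq.length_mul (cs.wordProd_mem_closure J hωJ),
        hq.length_mul (cs.wordProd_mem_closure J hωJ'), hω.eq, hω'.eq, length_append,
        length_singleton, add_assoc]
    simpa [wordProd_append, mul_assoc] using
      preceq_mul_simple cs J (hωJ i (by simp)) hlen (ih hωJ' hω')

theorem preceq_trans {p q r : W × W} (hq : isMinRep cs J q.1) (hpq : preceq cs J p q)
    (hqr : preceq cs J q r) : preceq cs J p r := by
  obtain ⟨v, hv, hx, hy⟩ := hqr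
  obtain ⟨ω, hωJ, hω, rfl⟩ := cs.exists_isReduced_word_of_mem_closure J hv
  obtain ⟨w, hw, hx', hy'⟩ := preceq_mul_wordProd cs J hq hωJ hω hpq
  exact ⟨w, hw, cs.bruhatLE_trans hx' hx, cs.bruhatLE_trans hy hy'⟩

end Preceq

theorem preceq_partial_order_general {B W : Type*} [Group W] {M : CoxeterMatrix B}
    (cs : CoxeterSystem M W) (J : Set B) :
    (∀ p : W × W, isMinRep cs J p.1 → preceq cs J p p) ∧
    (∀ p q : W × W, isMinRep cs J p.1 → isMinRep cs J q.1 →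
      preceq cs J p q → preceq cs J q p → p = q) ∧
    (∀ p q r : W × W, isMinRep cs J p.1 → isMinRep cs J q.1 → isMinRep cs J r.1 →
      preceq cs J p q → preceq cs J q r → preceq cs J p r) :=
  ⟨fun p _ => preceq_refl cs J p,
    fun _ _ hp hq => preceq_antisymm cs J hp hq,
    fun _ _ _ _ hq _ => preceq_trans cs J hq⟩

/-- The relation `⪯` is a partial order on `W^J × W`. -/
theorem preceq_partial_order {B W : Type*} [Group W] [Finite W] {M : CoxeterMatrix B}
    (cs : CoxeterSystem M W) (J : Set B) :
    (∀ p : W × W, isMinRep cs J p.1 → preceq cs J p p) ∧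
    (∀ p q : W × W, isMinRep cs J p.1 → isMinRep cs J q.1 →
      preceq cs J p q → preceq cs J q p → p = q) ∧
    (∀ p q r : W × W, isMinRep cs J p.1 → isMinRep cs J q.1 → isMinRep cs J r.1 →
      preceq cs J p q → preceq cs J q r → preceq cs J p r) :=
  preceq_partial_order_general cs J
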